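/- Let h ∈ Sp(n,1), let g = diag(λ₁, …, λₙ, λ_{n+1}) with each |λᵢ| = 1, and set δ = max_{1≤i≤n} sup{ |u λᵢ u⁻¹ − w λ_{n+1} w⁻¹|² : u, w ∈ ℍ \ {0} }. Define h₀ = h and h_{k+1} = h_k g h_k⁻¹, with block form h_k = [[A^{(k)}, α^{(k)}],[β^{(k)}, a^{(k)}]]. If |a^{(0)}|²·δ < 1, then for every k ≥ 0 one has |a^{(k)}|² − 1 ≤ (|a^{(0)}|² − 1)·(|a^{(0)}|²·δ)^k; consequently |a^{(k)}| → 1, β^{(k)} → 0 and α^{(k)} → 0 as k → ∞. -/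

import Mathlib

open Quaternion Matrix Filter

/-- The Hermitian form `J = diag(1,…,1,−1)` on `ℍ^{n,1}`, as an `(n+1)×(n+1)`
quaternionic matrix indexed by `Fin n ⊕ Unit`. -/
noncomputable def Jm (n : ℕ) : Matrix (Fin n ⊕ Unit) (Fin n ⊕ Unit) ℍ[ℝ] :=
  Matrix.fromBlocks 1 0 0 (-1)

/-- `Sp(n,1)`: the quaternionic matrices `g` with `g* J g = J`. -/
noncomputable def Sp (n : ℕ) : Set (Matrix (Fin n ⊕ Unit) (Fin n ⊕ Unit) ℍ[ℝ]) :=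
  {g | gᴴ * Jm n * g = Jm n}

/-!
Since `Sp(n,1)` is a group, with `g⁻¹ = J g* J`, every `h_k` lies in it, so the last row and the
last column of `h_k` satisfy `|a|² - Σ|βᵢ|² = 1 = |a|² - Σ|αᵢ|²`. The corner entry of `h_{k+1}` is
`a λ_{n+1} ā - Σ βᵢ λᵢ β̄ᵢ`: a quaternion of norm `|a|²` minus quaternions of norms `|βᵢ|²`, whose
directions `a λ_{n+1} a⁻¹` and `βᵢ λᵢ βᵢ⁻¹` are at squared distance at most `δ`. Expanding the
square gives `|a^{(k+1)}|² - 1 ≤ |a^{(k)}|² δ (|a^{(k)}|² - 1)`, which iterates to the geometric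
bound because `|a^{(k)}|` can only decrease; the row and column identities then force
`α^{(k)}, β^{(k)} → 0`.
-/

section InnerProduct

open scoped RealInnerProductSpace

variable {E : Type*} [NormedAddCommGroup E] [InnerProductSpace ℝ E]

theorem real_inner_eq_norm_mul_norm_mul_one_sub (x y : E) :
    ⟪x, y⟫ = ‖x‖ * ‖y‖ * (1 - ‖‖x‖⁻¹ • x - ‖y‖⁻¹ • y‖ ^ 2 / 2) := by
  rcases eq_or_ne x 0 with rfl | hx
  · simp
  rcases eq_or_ne y 0 with rfl | hy
  · simp
  have hx' : ‖x‖ ≠ 0 := norm_ne_zero_iff.mpr hx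
  have hy' : ‖y‖ ≠ 0 := norm_ne_zero_iff.mpr hy
  rw [norm_sub_sq_real, real_inner_smul_left, real_inner_smul_right, norm_smul, norm_smul,
    norm_inv, norm_norm, norm_inv, norm_norm, inv_mul_cancel₀ hx', inv_mul_cancel₀ hy']
  field_simp
  ring

theorem norm_sub_sum_sq_le {ι : Type*} (s : Finset ι) (c : E) (b : ι → E) {δ : ℝ}
    (hδ : ∀ i ∈ s, b i ≠ 0 → ‖‖c‖⁻¹ • c - ‖b i‖⁻¹ • b i‖ ^ 2 ≤ δ) :
    ‖c - ∑ i ∈ s, b i‖ ^ 2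
      ≤ (‖c‖ - ∑ i ∈ s, ‖b i‖) ^ 2 + ‖c‖ * (∑ i ∈ s, ‖b i‖) * δ := by
  set S := ∑ i ∈ s, ‖b i‖
  have hT : ‖∑ i ∈ s, b i‖ ≤ S := norm_sum_le _ _
  have hinner : ‖c‖ * S * (1 - δ / 2) ≤ ⟪c, ∑ i ∈ s, b i⟫ := by
    rw [inner_sum, Finset.mul_sum, Finset.sum_mul]
    refine Finset.sum_le_sum fun i hi => ?_
    rcases eq_or_ne (b i) 0 with hb | hb
    · simp [hb]
    rw [real_inner_eq_norm_mul_norm_mul_one_sub]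
    have := hδ i hi hb
    gcongr
  rw [norm_sub_sq_real]
  nlinarith [norm_nonneg (∑ i ∈ s, b i)]

end InnerProduct

namespace Quaternion

theorem coe_sum {ι : Type*} (s : Finset ι) (f : ι → ℝ) :
    ((∑ i ∈ s, f i : ℝ) : ℍ[ℝ]) = ∑ i ∈ s, (f i : ℍ[ℝ]) :=
  map_sum (algebraMap ℝ ℍ[ℝ]) f s

theorem star_mul_self_eq_norm_sq (a : ℍ[ℝ]) : star a * a = ((‖a‖ ^ 2 : ℝ) : ℍ[ℝ]) := by
  rw [star_mul_self, normSq_eq_norm_mul_self, sq]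

theorem self_mul_star_eq_norm_sq (a : ℍ[ℝ]) : a * star a = ((‖a‖ ^ 2 : ℝ) : ℍ[ℝ]) := by
  rw [self_mul_star, normSq_eq_norm_mul_self, sq]

theorem norm_mul_mul_star (u μ : ℍ[ℝ]) : ‖u * μ * star u‖ = ‖u‖ ^ 2 * ‖μ‖ := by
  rw [norm_mul, norm_mul, norm_star]
  ring

theorem inv_norm_smul_mul_mul_star {μ : ℍ[ℝ]} (hμ : ‖μ‖ = 1) (u : ℍ[ℝ]) :
    ‖u * μ * star u‖⁻¹ • (u * μ * star u) = u * μ * u⁻¹ := by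
  rw [norm_mul_mul_star, hμ, mul_one, inv_def, mul_smul_comm, normSq_eq_norm_mul_self, sq]

theorem norm_mul_mul_star_sub_sum_sq_le {ι : Type*} (s : Finset ι) {a μ : ℍ[ℝ]}
    {β ν : ι → ℍ[ℝ]} (hμ : ‖μ‖ = 1) (hν : ∀ i, ‖ν i‖ = 1) {δ : ℝ}
    (hδ : ∀ i ∈ s, β i ≠ 0 → ‖a * μ * a⁻¹ - β i * ν i * (β i)⁻¹‖ ^ 2 ≤ δ) :
    ‖a * μ * star a - ∑ i ∈ s, β i * ν i * star (β i)‖ ^ 2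
      ≤ (‖a‖ ^ 2 - ∑ i ∈ s, ‖β i‖ ^ 2) ^ 2 + ‖a‖ ^ 2 * (∑ i ∈ s, ‖β i‖ ^ 2) * δ := by
  have hc : ‖a * μ * star a‖ = ‖a‖ ^ 2 := by rw [norm_mul_mul_star, hμ, mul_one]
  have hb : ∀ i, ‖β i * ν i * star (β i)‖ = ‖β i‖ ^ 2 := fun i => by
    rw [norm_mul_mul_star, hν, mul_one]
  have := norm_sub_sum_sq_le s (a * μ * star a) (fun i => β i * ν i * star (β i)) fun i hi hβ => by
    rw [inv_norm_smul_mul_mul_star hμ, inv_norm_smul_mul_mul_star (hν i)]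
    exact hδ i hi (by rintro h; simp [h] at hβ)
  simpa only [hc, hb] using this

end Quaternion

section ConjugacyGap

variable {D ι : Type*} [NormedDivisionRing D]

def conjugacyGaps (x : ι → D) (y : D) : Set ℝ :=
  {r | ∃ i, ∃ u w : D, u ≠ 0 ∧ w ≠ 0 ∧ r = ‖u * x i * u⁻¹ - w * y * w⁻¹‖ ^ 2}

theorem norm_mul_mul_inv (x : D) {u : D} (hu : u ≠ 0) : ‖u * x * u⁻¹‖ = ‖x‖ := by
  rw [norm_mul, norm_mul, norm_inv, mul_comm ‖u‖, mul_assoc,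
    mul_inv_cancel₀ (norm_ne_zero_iff.mpr hu), mul_one]

theorem sSup_conjugacyGaps_nonneg (x : ι → D) (y : D) : 0 ≤ sSup (conjugacyGaps x y) :=
  Real.sSup_nonneg (by rintro _ ⟨i, u, w, -, -, rfl⟩; positivity)

theorem le_sSup_conjugacyGaps {x : ι → D} {y : D} (hx : ∀ i, ‖x i‖ ≤ 1) (hy : ‖y‖ ≤ 1) (i : ι)
    {u w : D} (hu : u ≠ 0) (hw : w ≠ 0) :
    ‖u * x i * u⁻¹ - w * y * w⁻¹‖ ^ 2 ≤ sSup (conjugacyGaps x y) := by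
  refine le_csSup ⟨2 ^ 2, ?_⟩ ⟨i, u, w, hu, hw, rfl⟩
  rintro _ ⟨j, u', w', hu', hw', rfl⟩
  have := norm_sub_le (u' * x j * u'⁻¹) (w' * y * w'⁻¹)
  rw [norm_mul_mul_inv _ hu', norm_mul_mul_inv _ hw'] at this
  gcongr
  linarith [hx j]

end ConjugacyGap

theorem sub_one_le_mul_pow_of_sub_one_le_mul {x : ℕ → ℝ} {δ : ℝ} (hδ : 0 ≤ δ)
    (hx : ∀ k, 1 ≤ x k) (hstep : ∀ k, x (k + 1) - 1 ≤ x k * δ * (x k - 1))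
    (hsmall : x 0 * δ ≤ 1) (k : ℕ) : x k - 1 ≤ (x 0 - 1) * (x 0 * δ) ^ k := by
  induction k with
  | zero => simp
  | succ k ih =>
    have hq : 0 ≤ x 0 * δ := mul_nonneg (zero_le_one.trans (hx 0)) hδ
    have hxk : x k ≤ x 0 := by
      have := mul_le_of_le_one_right (sub_nonneg.2 (hx 0)) (pow_le_one₀ (n := k) hq hsmall)
      linarith
    calc x (k + 1) - 1 ≤ x k * δ * (x k - 1) := hstep k
      _ ≤ x 0 * δ * ((x 0 - 1) * (x 0 * δ) ^ k) := by
        gcongr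
        · linarith [hx k]
      _ = (x 0 - 1) * (x 0 * δ) ^ (k + 1) := by ring

theorem tendsto_zero_of_norm_sq_le {α E : Type*} [SeminormedAddCommGroup E] {l : Filter α}
    {f : α → E} {g : α → ℝ} (hfg : ∀ a, ‖f a‖ ^ 2 ≤ g a) (hg : Tendsto g l (nhds 0)) :
    Tendsto f l (nhds 0) :=
  squeeze_zero_norm (fun a => by simpa using Real.abs_le_sqrt (hfg a)) (by simpa using hg.sqrt)

section Sp

variable {n : ℕ}

theorem Jm_mul_Jm (n : ℕ) : Jm n * Jm n = 1 := by
  simp [Jm, fromBlocks_multiply, fromBlocks_one]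

theorem conjTranspose_Jm (n : ℕ) : (Jm n)ᴴ = Jm n := by
  simp [Jm, fromBlocks_conjTranspose]

theorem Jm_mem_Sp (n : ℕ) : Jm n ∈ Sp n := by
  change (Jm n)ᴴ * Jm n * Jm n = Jm n
  rw [conjTranspose_Jm, Jm_mul_Jm, Matrix.one_mul]

theorem mul_Jm_mul_apply_inr_inr (A B : Matrix (Fin n ⊕ Unit) (Fin n ⊕ Unit) ℍ[ℝ]) :
    (A * Jm n * B) (Sum.inr ()) (Sum.inr ())
      = ∑ i, A (Sum.inr ()) (Sum.inl i) * B (Sum.inl i) (Sum.inr ())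
        - A (Sum.inr ()) (Sum.inr ()) * B (Sum.inr ()) (Sum.inr ()) := by
  simp [Jm, mul_apply, Fintype.sum_sum_type, one_apply, sub_eq_add_neg]

theorem mul_mem_Sp {A B : Matrix (Fin n ⊕ Unit) (Fin n ⊕ Unit) ℍ[ℝ]} (hA : A ∈ Sp n)
    (hB : B ∈ Sp n) : A * B ∈ Sp n := by
  change (A * B)ᴴ * Jm n * (A * B) = Jm n
  calc (A * B)ᴴ * Jm n * (A * B) = Bᴴ * (Aᴴ * Jm n * A) * B := by
        simp only [conjTranspose_mul, Matrix.mul_assoc]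
    _ = Jm n := by rw [hA, hB]

theorem diagonal_mem_Sp {lam : Fin n ⊕ Unit → ℍ[ℝ]} (hlam : ∀ i, ‖lam i‖ = 1) :
    diagonal lam ∈ Sp n := by
  have hunit : ∀ i, star (lam i) * lam i = 1 := fun i => by
    rw [star_mul_self_eq_norm_sq, hlam]; simp
  change (diagonal lam)ᴴ * Jm n * diagonal lam = Jm n
  refine Matrix.ext fun i j => ?_
  rcases i with i | i <;> rcases j with j | j <;> simp [Jm, one_apply]
  · split_ifs with h <;> simp [h, hunit]
  · simp [hunit]

variable {M : Matrix (Fin n ⊕ Unit) (Fin n ⊕ Unit) ℍ[ℝ]}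

theorem conjTranspose_mem_Sp (hM : M ∈ Sp n) : Mᴴ ∈ Sp n := by
  -- `J Mᴴ J` is a left inverse of `M`, hence also a right one: square matrices over a division
  -- ring form a Dedekind-finite monoid.
  have hinv : M * (Jm n * Mᴴ * Jm n) = 1 := by
    refine mul_eq_one_comm.mp ?_
    rw [Matrix.mul_assoc, Matrix.mul_assoc, ← Matrix.mul_assoc Mᴴ, hM, Jm_mul_Jm]
  change Mᴴᴴ * Jm n * Mᴴ = Jm n
  simpa only [conjTranspose_conjTranspose, Matrix.mul_assoc, Jm_mul_Jm, Matrix.mul_one,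
    Matrix.one_mul] using congrArg (· * Jm n) hinv

theorem norm_sq_sub_sum_norm_sq_col (hM : M ∈ Sp n) :
    ‖M (Sum.inr ()) (Sum.inr ())‖ ^ 2 - ∑ i, ‖M (Sum.inl i) (Sum.inr ())‖ ^ 2 = 1 := by
  have := congr_fun₂ hM (Sum.inr ()) (Sum.inr ())
  simp only [mul_Jm_mul_apply_inr_inr, conjTranspose_apply, star_mul_self_eq_norm_sq] at this
  rw [← coe_sum, ← coe_sub] at this
  have hre : ((∑ i, ‖M (Sum.inl i) (Sum.inr ())‖ ^ 2 - ‖M (Sum.inr ()) (Sum.inr ())‖ ^ 2 : ℝ)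
      : ℍ[ℝ]) = ((-1 : ℝ) : ℍ[ℝ]) := by
    rw [this]; simp [Jm]
  linarith [coe_injective hre]

theorem norm_sq_sub_sum_norm_sq_row (hM : M ∈ Sp n) :
    ‖M (Sum.inr ()) (Sum.inr ())‖ ^ 2 - ∑ i, ‖M (Sum.inr ()) (Sum.inl i)‖ ^ 2 = 1 := by
  simpa using norm_sq_sub_sum_norm_sq_col (conjTranspose_mem_Sp hM)

theorem conj_diagonal_apply_inr_inr (lam : Fin n ⊕ Unit → ℍ[ℝ]) :
    (M * diagonal lam * (Jm n * Mᴴ * Jm n)) (Sum.inr ()) (Sum.inr ())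
      = M (Sum.inr ()) (Sum.inr ()) * lam (Sum.inr ()) * star (M (Sum.inr ()) (Sum.inr ()))
      - ∑ i, M (Sum.inr ()) (Sum.inl i) * lam (Sum.inl i) * star (M (Sum.inr ()) (Sum.inl i)) := by
  rw [show M * diagonal lam * (Jm n * Mᴴ * Jm n) = M * diagonal lam * Jm n * (Mᴴ * Jm n) by
    simp only [Matrix.mul_assoc], mul_Jm_mul_apply_inr_inr]
  simp only [mul_diagonal]
  simp [Jm, mul_apply, Fintype.sum_sum_type, neg_add_eq_sub]

theorem one_le_norm_sq_apply_inr_inr (hM : M ∈ Sp n) : 1 ≤ ‖M (Sum.inr ()) (Sum.inr ())‖ ^ 2 := by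
  have := norm_sq_sub_sum_norm_sq_col hM
  have : 0 ≤ ∑ i, ‖M (Sum.inl i) (Sum.inr ())‖ ^ 2 := by positivity
  linarith

theorem norm_sq_apply_inl_inr_le (hM : M ∈ Sp n) (i : Fin n) :
    ‖M (Sum.inl i) (Sum.inr ())‖ ^ 2 ≤ ‖M (Sum.inr ()) (Sum.inr ())‖ ^ 2 - 1 := by
  rw [← norm_sq_sub_sum_norm_sq_col hM, sub_sub_cancel]
  exact Finset.single_le_sum (f := fun j => ‖M (Sum.inl j) (Sum.inr ())‖ ^ 2)
    (fun j _ => by positivity) (Finset.mem_univ i)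

theorem norm_sq_apply_inr_inl_le (hM : M ∈ Sp n) (i : Fin n) :
    ‖M (Sum.inr ()) (Sum.inl i)‖ ^ 2 ≤ ‖M (Sum.inr ()) (Sum.inr ())‖ ^ 2 - 1 := by
  simpa using norm_sq_apply_inl_inr_le (conjTranspose_mem_Sp hM) i

theorem conj_diagonal_mem_Sp (hM : M ∈ Sp n) {lam : Fin n ⊕ Unit → ℍ[ℝ]}
    (hlam : ∀ i, ‖lam i‖ = 1) : M * diagonal lam * (Jm n * Mᴴ * Jm n) ∈ Sp n :=
  mul_mem_Sp (mul_mem_Sp hM (diagonal_mem_Sp hlam))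
    (mul_mem_Sp (mul_mem_Sp (Jm_mem_Sp n) (conjTranspose_mem_Sp hM)) (Jm_mem_Sp n))

theorem norm_sq_conj_diagonal_apply_inr_inr_sub_one_le (hM : M ∈ Sp n)
    {lam : Fin n ⊕ Unit → ℍ[ℝ]} (hlam : ∀ i, ‖lam i‖ = 1) {δ : ℝ}
    (hδ : ∀ (i : Fin n) (u w : ℍ[ℝ]), u ≠ 0 → w ≠ 0 →
      ‖u * lam (Sum.inl i) * u⁻¹ - w * lam (Sum.inr ()) * w⁻¹‖ ^ 2 ≤ δ) :
    ‖(M * diagonal lam * (Jm n * Mᴴ * Jm n)) (Sum.inr ()) (Sum.inr ())‖ ^ 2 - 1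
      ≤ ‖M (Sum.inr ()) (Sum.inr ())‖ ^ 2 * δ * (‖M (Sum.inr ()) (Sum.inr ())‖ ^ 2 - 1) := by
  have hrow := norm_sq_sub_sum_norm_sq_row hM
  have ha : M (Sum.inr ()) (Sum.inr ()) ≠ 0 := by
    intro h
    have := one_le_norm_sq_apply_inr_inr hM
    norm_num [h] at this
  have hsum : ∑ i, ‖M (Sum.inr ()) (Sum.inl i)‖ ^ 2 = ‖M (Sum.inr ()) (Sum.inr ())‖ ^ 2 - 1 := by
    linarith
  have := norm_mul_mul_star_sub_sum_sq_le Finset.univ (hlam (Sum.inr ()))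
    (fun i => hlam (Sum.inl i)) (a := M (Sum.inr ()) (Sum.inr ()))
    (β := fun i => M (Sum.inr ()) (Sum.inl i)) (δ := δ) (fun i _ hβ => by
      rw [norm_sub_rev]
      exact hδ i _ _ hβ ha)
  rw [hrow, hsum] at this
  rw [conj_diagonal_apply_inr_inr]
  linarith

end Sp

theorem stmt10 (n : ℕ) (h : Matrix (Fin n ⊕ Unit) (Fin n ⊕ Unit) ℍ[ℝ]) (hSp : h ∈ Sp n)
    (lam : Fin n ⊕ Unit → ℍ[ℝ]) (hlam : ∀ i, ‖lam i‖ = 1)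
    (δ : ℝ)
    (hδ : δ = sSup {r : ℝ | ∃ i : Fin n, ∃ u w : ℍ[ℝ], u ≠ 0 ∧ w ≠ 0 ∧
        r = ‖u * lam (Sum.inl i) * u⁻¹ - w * lam (Sum.inr ()) * w⁻¹‖ ^ 2})
    (hs : ℕ → Matrix (Fin n ⊕ Unit) (Fin n ⊕ Unit) ℍ[ℝ])
    (hs0 : hs 0 = h)
    (hsrec : ∀ k, hs (k + 1) = hs k * Matrix.diagonal lam * (Jm n * (hs k)ᴴ * Jm n))
    (hsmall : ‖h (Sum.inr ()) (Sum.inr ())‖ ^ 2 * δ < 1) :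
    (∀ k, ‖hs k (Sum.inr ()) (Sum.inr ())‖ ^ 2 - 1
        ≤ (‖h (Sum.inr ()) (Sum.inr ())‖ ^ 2 - 1)
          * (‖h (Sum.inr ()) (Sum.inr ())‖ ^ 2 * δ) ^ k)
    ∧ Tendsto (fun k => ‖hs k (Sum.inr ()) (Sum.inr ())‖) atTop (nhds 1)
    ∧ (∀ i : Fin n, Tendsto (fun k => hs k (Sum.inr ()) (Sum.inl i)) atTop (nhds 0))
    ∧ (∀ i : Fin n, Tendsto (fun k => hs k (Sum.inl i) (Sum.inr ())) atTop (nhds 0)) := by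
  have hSp_k : ∀ k, hs k ∈ Sp n :=
    Nat.rec (hs0 ▸ hSp) fun k ih => hsrec k ▸ conj_diagonal_mem_Sp ih hlam
  change δ = sSup (conjugacyGaps (fun i => lam (Sum.inl i)) (lam (Sum.inr ()))) at hδ
  have hgap : ∀ (i : Fin n) (u w : ℍ[ℝ]), u ≠ 0 → w ≠ 0 →
      ‖u * lam (Sum.inl i) * u⁻¹ - w * lam (Sum.inr ()) * w⁻¹‖ ^ 2 ≤ δ := fun i u w hu hw =>
    hδ ▸ le_sSup_conjugacyGaps (fun i => (hlam _).le) (hlam _).le i hu hw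
  have hδ0 : 0 ≤ δ := hδ ▸ sSup_conjugacyGaps_nonneg _ _
  have hbound := sub_one_le_mul_pow_of_sub_one_le_mul
    (x := fun k => ‖hs k (Sum.inr ()) (Sum.inr ())‖ ^ 2) hδ0
    (fun k => one_le_norm_sq_apply_inr_inr (hSp_k k))
    (fun k => hsrec k ▸ norm_sq_conj_diagonal_apply_inr_inr_sub_one_le (hSp_k k) hlam hgap)
    (hs0 ▸ hsmall.le)
  simp only [hs0] at hbound
  have hlim : Tendsto (fun k => ‖hs k (Sum.inr ()) (Sum.inr ())‖ ^ 2 - 1) atTop (nhds 0) := by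
    refine squeeze_zero (fun k => sub_nonneg.2 (one_le_norm_sq_apply_inr_inr (hSp_k k))) hbound ?_
    simpa using (tendsto_pow_atTop_nhds_zero_of_lt_one (by positivity) hsmall).const_mul
      (‖h (Sum.inr ()) (Sum.inr ())‖ ^ 2 - 1)
  refine ⟨hbound, ?_,
    fun i => tendsto_zero_of_norm_sq_le (fun k => norm_sq_apply_inr_inl_le (hSp_k k) i) hlim,
    fun i => tendsto_zero_of_norm_sq_le (fun k => norm_sq_apply_inl_inr_le (hSp_k k) i) hlim⟩
  simpa [Real.sqrt_sq (norm_nonneg _)] using (hlim.add_const 1).sqrt
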